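/- arXiv:2506.18409 — 3 statements merged into one kernel-verified Lean document; each statement's English description precedes it below -/
import Mathlib

section
/- Let u : ℕ → ℝ with u ∈ Λ. Then Δ_u ≠ ∅ if and only if there exists k ∈ ℕ with u_k ≥ L(u). -/
/-! If `k ∈ Δ_u`, the maximum of `u_0, …, u_k` is attained at some `j` and dominates every later
term, hence the limsup. If `Δ_u = ∅`, every prefix maximum is strictly exceeded later on, so each
`u_k` is exceeded by some `u_n` which is itself exceeded infinitely often: `u_k < u_n ≤ L(u)`. -/

open Set Filter

/-- `V u` is the supremum of the sequence `u` (real `sSup`, junk value if unbounded). -/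
noncomputable def V (u : ℕ → ℝ) : ℝ := sSup (Set.range u)

/-- `L u` is the limit superior of `u` taken in the extended reals. -/
noncomputable def L (u : ℕ → ℝ) : EReal :=
  Filter.limsup (fun n => ((u n : ℝ) : EReal)) Filter.atTop

/-- `u ∈ Λ` : the supremum of `u` is finite, i.e. `u` is bounded above. -/
def MemLambda (u : ℕ → ℝ) : Prop := BddAbove (Set.range u)

/-- `Δ_u = {k : max_{0 ≤ j ≤ k} u_j ≥ sup_{j > k} u_j}`. -/
noncomputable def Delta (u : ℕ → ℝ) : Set ℕ :=
  {k | sSup (u '' Set.Ioi k) ≤ sSup (u '' Set.Iic k)}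

/-- `Δˢ_u = {k : max_{0 ≤ j ≤ k} u_j > sup_{j > k} u_j}`. -/
noncomputable def DeltaS (u : ℕ → ℝ) : Set ℕ :=
  {k | sSup (u '' Set.Ioi k) < sSup (u '' Set.Iic k)}

/-- `Argmax u = {k : u k = V u}`. -/
noncomputable def Argmax (u : ℕ → ℝ) : Set ℕ := {k | u k = V u}

theorem L_le_sSup_image_Ioi {u : ℕ → ℝ} (k : ℕ) (hu : BddAbove (u '' Ioi k)) :
    L u ≤ ((sSup (u '' Ioi k) : ℝ) : EReal) :=
  limsup_le_of_le (by isBoundedDefault) <| (eventually_gt_atTop k).mono fun _ hn =>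
    EReal.coe_le_coe (le_csSup hu ⟨_, hn, rfl⟩)

theorem exists_lt_of_notMem_Delta {u : ℕ → ℝ} {k : ℕ} (hk : k ∉ Delta u) :
    ∃ n > k, ∀ j ≤ k, u j < u n := by
  obtain ⟨_, ⟨n, hn, rfl⟩, hlt⟩ :=
    exists_lt_of_lt_csSup (nonempty_Ioi.image u) (not_le.1 hk)
  exact ⟨n, hn, fun j hj =>
    (le_csSup ((finite_Iic k).image u).bddAbove (mem_image_of_mem u hj)).trans_lt hlt⟩

theorem coe_lt_L_of_forall_exists_lt {u : ℕ → ℝ} (h : ∀ m, ∃ n > m, ∀ j ≤ m, u j < u n)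
    (k : ℕ) : ((u k : ℝ) : EReal) < L u := by
  have frequently_gt : ∀ i, ∃ᶠ m in atTop, u i < u m := fun i =>
    frequently_atTop.2 fun a =>
      let ⟨n, hn, hlt⟩ := h (max a i)
      ⟨n, (le_max_left a i).trans hn.le, hlt i (le_max_right a i)⟩
  obtain ⟨n, -, hkn⟩ := h k
  calc ((u k : ℝ) : EReal) < u n := EReal.coe_lt_coe (hkn k le_rfl)
    _ ≤ L u := le_limsup_of_frequently_le
        ((frequently_gt n).mono fun _ hm => EReal.coe_le_coe hm.le) (by isBoundedDefault)

/-- for u ∈ Λ, Δ_u ≠ ∅ iff some term of u is at least the limsup. -/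
theorem delta_nonempty_iff (u : ℕ → ℝ) (hu : MemLambda u) :
    (Delta u).Nonempty ↔ ∃ k : ℕ, L u ≤ ((u k : ℝ) : EReal) := by
  constructor
  · rintro ⟨k, hk⟩
    obtain ⟨j, -, hj⟩ := (nonempty_Iic.image u).csSup_mem ((finite_Iic k).image u)
    refine ⟨j, (L_le_sSup_image_Ioi k (hu.mono (image_subset_range u _))).trans ?_⟩
    rw [hj]
    exact EReal.coe_le_coe hk
  · rintro ⟨k, hk⟩
    by_contra hempty
    have hnot : ∀ m, m ∉ Delta u := fun m hm => hempty ⟨m, hm⟩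
    exact (coe_lt_L_of_forall_exists_lt (fun m => exists_lt_of_notMem_Delta (hnot m)) k).not_ge hk
end

section
/- Let u : ℕ → ℝ with u ∈ Λ and suppose Δ_u ≠ ∅. Then the least element of Δ_u belongs to Argmax(u) and equals the least element of Argmax(u); that is, min Δ_u = min Argmax(u). -/
open Set Filter

/-! A finite prefix attains its maximum, so `k ∈ Δ_u` says exactly that this maximum is the
supremum `V u` of the whole sequence, i.e. that some index `j ≤ k` is a maximiser. Hence `Δ_u` is the
upper closure of `Argmax u`, and a set of naturals and its upper closure have the same least element. -/

theorem isLeast_upperClosure {α : Type*} [Preorder α] {s : Set α} {a : α} (h : IsLeast s a) :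
    IsLeast (upperClosure s : Set α) a :=
  ⟨subset_upperClosure h.1, by rw [lowerBounds_upperClosure]; exact h.2⟩

theorem exists_le_eq_sSup_image_Iic {α : Type*} [ConditionallyCompleteLinearOrder α]
    (u : ℕ → α) (k : ℕ) : ∃ j ≤ k, u j = sSup (u '' Iic k) :=
  (nonempty_Iic.image u).csSup_mem ((finite_Iic k).image u)

theorem le_sSup_image_Iic {α : Type*} [ConditionallyCompleteLinearOrder α]
    (u : ℕ → α) {j k : ℕ} (hjk : j ≤ k) : u j ≤ sSup (u '' Iic k) :=
  le_csSup ((finite_Iic k).image u).bddAbove (mem_image_of_mem u hjk)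

theorem delta_eq_upperClosure_argmax {u : ℕ → ℝ} (hu : MemLambda u) :
    Delta u = upperClosure (Argmax u) := by
  ext k
  simp only [SetLike.mem_coe, mem_upperClosure, Argmax, Delta, mem_ofPred_eq]
  constructor
  · intro hk
    obtain ⟨j, hjk, hj⟩ := exists_le_eq_sSup_image_Iic u k
    refine ⟨j, le_antisymm (le_csSup hu (mem_range_self j)) ?_, hjk⟩
    refine csSup_le (range_nonempty u) (forall_mem_range.2 fun n => ?_)
    rcases le_or_gt n k with hn | hn
    · exact hj ▸ le_sSup_image_Iic u hn
    · calc u n ≤ sSup (u '' Ioi k) :=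
            le_csSup (hu.mono (image_subset_range u _)) (mem_image_of_mem u hn)
        _ ≤ u j := hj ▸ hk
  · rintro ⟨j, hj, hjk⟩
    calc sSup (u '' Ioi k) ≤ V u :=
          csSup_le_csSup hu (nonempty_Ioi.image u) (image_subset_range u _)
      _ = u j := hj.symm
      _ ≤ sSup (u '' Iic k) := le_sSup_image_Iic u hjk

/-- for u ∈ Λ with Δ_u ≠ ∅, the least element of Δ_u belongs to Argmax u
and equals the least element of Argmax u. -/
theorem sInf_delta_eq_sInf_argmax (u : ℕ → ℝ) (hu : MemLambda u)
    (hne : (Delta u).Nonempty) :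
    sInf (Delta u) ∈ Argmax u ∧ sInf (Delta u) = sInf (Argmax u) := by
  rw [delta_eq_upperClosure_argmax hu] at hne ⊢
  obtain ⟨_, j, hj, -⟩ := hne
  have hleast := isLeast_csInf ⟨j, hj⟩
  rw [(isLeast_upperClosure hleast).csInf_eq]
  exact ⟨hleast.1, rfl⟩
end

section
/- Let u : ℕ → ℝ, (h,β) ∈ Γ(u) and k ∈ S(u,h). Then F_u(k,h,β) ≥ k. Moreover, if (h,β) is decreasing from N ∈ ℕ and k ≥ N, then for every j ∈ ℕ with j > F_u(k,h,β) one has u_j < u_k. -/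
open Set Filter

/-!
Since `h k` is strictly increasing, `h k x = u k ≤ h k (β k ^ k)` gives `x ≤ β k ^ k`, i.e.
`k ≤ log_{β k} x`. If `j > log_{β k} x` then `β k ^ j < x`, and monotonicity of `(h, β)` in the
index gives `u j ≤ h j (β j ^ j) ≤ h k (β k ^ j) < h k x = u k`.
-/

/-- Ω([0,1]): functions ℝ → ℝ strictly increasing and continuous on [0,1]. -/
def OmegaFun (f : ℝ → ℝ) : Prop :=
  StrictMonoOn f (Set.Icc 0 1) ∧ ContinuousOn f (Set.Icc 0 1)

/-- (h,β) ∈ Γ(u): h k ∈ Ω([0,1]), β k ∈ (0,1) and u k ≤ h k (β k ^ k) for all k. -/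
def InGamma (u : ℕ → ℝ) (h : ℕ → ℝ → ℝ) (β : ℕ → ℝ) : Prop :=
  (∀ k, OmegaFun (h k)) ∧ (∀ k, β k ∈ Set.Ioo (0:ℝ) 1) ∧ (∀ k, u k ≤ h k (β k ^ k))

/-- (h,β) is decreasing from N. -/
def DecreasingFrom (h : ℕ → ℝ → ℝ) (β : ℕ → ℝ) (N : ℕ) : Prop :=
  ∀ n, N ≤ n → (∀ x ∈ Set.Icc (0:ℝ) 1, h (n+1) x ≤ h n x) ∧ β (n+1) ≤ β n

variable {u : ℕ → ℝ} {h : ℕ → ℝ → ℝ} {β : ℕ → ℝ}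

theorem DecreasingFrom.le_of_le {N k j : ℕ} (hd : DecreasingFrom h β N) (hNk : N ≤ k)
    (hkj : k ≤ j) : (∀ x ∈ Icc (0:ℝ) 1, h j x ≤ h k x) ∧ β j ≤ β k := by
  induction j, hkj using Nat.le_induction with
  | base => exact ⟨fun _ _ => le_rfl, le_rfl⟩
  | succ n hkn ih =>
    obtain ⟨hh, hβ⟩ := hd n (hNk.trans hkn)
    exact ⟨fun y hy => (hh y hy).trans (ih.1 y hy), hβ.trans ih.2⟩

namespace InGamma

theorem pow_mem_Icc (hΓ : InGamma u h β) (k m : ℕ) : β k ^ m ∈ Icc (0:ℝ) 1 :=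
  have hβ := hΓ.2.1 k
  ⟨pow_nonneg hβ.1.le m, pow_le_one₀ hβ.1.le hβ.2.le⟩

theorem le_pow_of_apply_eq (hΓ : InGamma u h β) {k : ℕ} {x : ℝ} (hx : x ∈ Icc (0:ℝ) 1)
    (hhx : h k x = u k) : x ≤ β k ^ k :=
  ((hΓ.1 k).1.le_iff_le hx (hΓ.pow_mem_Icc k k)).mp (hhx.trans_le (hΓ.2.2 k))

theorem le_apply_pow_of_decreasingFrom (hΓ : InGamma u h β) {N k j : ℕ}
    (hd : DecreasingFrom h β N) (hNk : N ≤ k) (hkj : k ≤ j) : u j ≤ h k (β k ^ j) := by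
  obtain ⟨hh, hβ⟩ := hd.le_of_le hNk hkj
  have hβj := hΓ.2.1 j
  calc u j ≤ h j (β j ^ j) := hΓ.2.2 j
    _ ≤ h k (β j ^ j) := hh _ (hΓ.pow_mem_Icc j j)
    _ ≤ h k (β k ^ j) :=
      (hΓ.1 k).1.monotoneOn (hΓ.pow_mem_Icc j j) (hΓ.pow_mem_Icc k j)
        (pow_le_pow_left₀ hβj.1.le hβ j)

end InGamma

theorem upper_bound_functional_ge_and_tail_lt_general (u : ℕ → ℝ) (h : ℕ → ℝ → ℝ) (β : ℕ → ℝ)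
    (hΓ : InGamma u h β) (k : ℕ)
    (x : ℝ) (hx : x ∈ Set.Ioc (0:ℝ) 1) (hhx : h k x = u k) :
    (k : ℝ) ≤ Real.log x / Real.log (β k) ∧
    ∀ N : ℕ, DecreasingFrom h β N → N ≤ k →
      ∀ j : ℕ, Real.log x / Real.log (β k) < (j : ℝ) → u j < u k := by
  obtain ⟨hβ₀, hβ₁⟩ := hΓ.2.1 k
  have hx' : x ∈ Icc (0:ℝ) 1 := Ioc_subset_Icc_self hx
  rw [Real.log_div_log]
  have hk_le : (k : ℝ) ≤ Real.logb (β k) x := by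
    rw [Real.le_logb_iff_rpow_le_of_base_lt_one hβ₀ hβ₁ hx.1, Real.rpow_natCast]
    exact hΓ.le_pow_of_apply_eq hx' hhx
  refine ⟨hk_le, fun N hd hNk j hj => ?_⟩
  have hkj : k ≤ j := by exact_mod_cast hk_le.trans hj.le
  rw [Real.logb_lt_iff_lt_rpow_of_base_lt_one hβ₀ hβ₁ hx.1, Real.rpow_natCast] at hj
  calc u j ≤ h k (β k ^ j) := hΓ.le_apply_pow_of_decreasingFrom hd hNk hkj
    _ < h k x := (hΓ.1 k).1 (hΓ.pow_mem_Icc k j) hx' hj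
    _ = u k := hhx

/-- F_u(k,h,β) ≥ k, and if (h,β) is decreasing from N with k ≥ N, then
every j > F_u(k,h,β) satisfies u j < u k. -/
theorem upper_bound_functional_ge_and_tail_lt (u : ℕ → ℝ) (h : ℕ → ℝ → ℝ) (β : ℕ → ℝ)
    (hΓ : InGamma u h β) (k : ℕ) (hk : h k 0 < u k)
    (x : ℝ) (hx : x ∈ Set.Ioc (0:ℝ) 1) (hhx : h k x = u k) :
    (k : ℝ) ≤ Real.log x / Real.log (β k) ∧
    ∀ N : ℕ, DecreasingFrom h β N → N ≤ k →
      ∀ j : ℕ, Real.log x / Real.log (β k) < (j : ℝ) → u j < u k :=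
  upper_bound_functional_ge_and_tail_lt_general u h β hΓ k x hx hhx
end
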